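/- Let E be a finite set of edges, let C > 0, k a positive integer, and for each e ∈ E let C(e) = λ_e·C with λ_e ∈ [0,1] and Σ_e λ_e = k. Let the sampling probabilities satisfy p_e ≥ α/m for all e, where 0 < α ≤ m. In a single round exactly one edge R is sampled with P[R = e] = p_e, and the estimator is X = C(R)/(k·p_R). Then E[X²] ≤ (m/(α·k))·C². -/

import Mathlib

/-!
Pushing the law of `R` forward, `E[X²] = ∑ₑ pₑ (λₑ C / (k pₑ))² = ∑ₑ λₑ² C² / (k² pₑ)`.
Each term is at most `λₑ · (m / α) · (C / k)²`, using `λₑ² ≤ λₑ` (as `λₑ ∈ [0, 1]`) and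
`1 / pₑ ≤ m / α`; summing with `∑ₑ λₑ = k` gives `m C² / (α k)`.
-/

open MeasureTheory ProbabilityTheory

theorem integral_comp_eq_sum_measureReal_preimage {Ω E F : Type*} [MeasurableSpace Ω]
    [MeasurableSpace E] [MeasurableSingletonClass E] [Fintype E]
    [NormedAddCommGroup F] [NormedSpace ℝ F] [CompleteSpace F]
    (μ : Measure Ω) [IsFiniteMeasure μ] {R : Ω → E} (hR : Measurable R) (g : E → F) :
    ∫ ω, g (R ω) ∂μ = ∑ e, μ.real {ω | R ω = e} • g e := by
  rw [← integral_map hR.aemeasurable .of_discrete, integral_fintype .of_finite]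
  congr! 2 with e
  rw [map_measureReal_apply hR (measurableSet_singleton e)]
  rfl

theorem mul_sq_div_mul_le {lam c k p α m : ℝ} (hlam : lam ∈ Set.Icc (0 : ℝ) 1)
    (hα : 0 < α) (hm : 0 < m) (hp : α / m ≤ p) :
    p * (lam * c / (k * p)) ^ 2 ≤ lam * (m / α) * (c / k) ^ 2 := by
  obtain ⟨hlam₀, hlam₁⟩ := hlam
  have hp₀ : 0 < p := (div_pos hα hm).trans_le hp
  have hinv : 1 / p ≤ m / α := by
    simpa only [one_div_div] using one_div_le_one_div_of_le (div_pos hα hm) hp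
  have hsq : lam ^ 2 ≤ lam := by nlinarith
  calc p * (lam * c / (k * p)) ^ 2 = lam ^ 2 * (1 / p) * (c / k) ^ 2 := by
        field_simp
    _ ≤ lam * (m / α) * (c / k) ^ 2 := by gcongr

theorem stmt3_general {Ω : Type*} [MeasureSpace Ω] [IsProbabilityMeasure (ℙ : Measure Ω)]
    {E : Type*} [Fintype E] [MeasurableSpace E] [MeasurableSingletonClass E]
    (Cv : ℝ) (k : ℕ) (hk : 0 < k)
    (lam : E → ℝ) (hlam : ∀ e, lam e ∈ Set.Icc (0 : ℝ) 1)
    (hlamsum : ∑ e, lam e = k)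
    (Cfun : E → ℝ) (hCfun : ∀ e, Cfun e = lam e * Cv)
    (p : E → ℝ) (α m : ℝ) (hα : 0 < α) (hαm : α ≤ m)
    (hp : ∀ e, α / m ≤ p e)
    (R : Ω → E) (hR : Measurable R)
    (hlaw : ∀ e, (ℙ {ω | R ω = e}).toReal = p e) :
    ∫ ω, (Cfun (R ω) / (k * p (R ω))) ^ 2 ≤ m / (α * k) * Cv ^ 2 := by
  have hm : 0 < m := hα.trans_le hαm
  have hk' : (k : ℝ) ≠ 0 := by positivity
  calc ∫ ω, (Cfun (R ω) / (k * p (R ω))) ^ 2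
      = ∑ e, p e * (lam e * Cv / (k * p e)) ^ 2 := by
        rw [integral_comp_eq_sum_measureReal_preimage ℙ hR fun e => (Cfun e / (k * p e)) ^ 2]
        simp only [measureReal_def, hlaw, hCfun, smul_eq_mul]
    _ ≤ ∑ e, lam e * (m / α) * (Cv / k) ^ 2 :=
        Finset.sum_le_sum fun e _ => mul_sq_div_mul_le (hlam e) hα hm (hp e)
    _ = m / (α * k) * Cv ^ 2 := by
        rw [← Finset.sum_mul, ← Finset.sum_mul, hlamsum]
        field_simp

/-- Second-moment bound for ODeN's single-round estimator X = C(R)/(k·p_R). -/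
theorem stmt3 {Ω : Type*} [MeasureSpace Ω] [IsProbabilityMeasure (ℙ : Measure Ω)]
    {E : Type*} [Fintype E] [MeasurableSpace E] [MeasurableSingletonClass E]
    (Cv : ℝ) (hCv : 0 < Cv) (k : ℕ) (hk : 0 < k)
    (lam : E → ℝ) (hlam : ∀ e, lam e ∈ Set.Icc (0 : ℝ) 1)
    (hlamsum : ∑ e, lam e = k)
    (Cfun : E → ℝ) (hCfun : ∀ e, Cfun e = lam e * Cv)
    (p : E → ℝ) (α m : ℝ) (hα : 0 < α) (hαm : α ≤ m)
    (hp : ∀ e, α / m ≤ p e) (hpsum : ∑ e, p e = 1)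
    (R : Ω → E) (hR : Measurable R)
    (hlaw : ∀ e, (ℙ {ω | R ω = e}).toReal = p e) :
    ∫ ω, (Cfun (R ω) / (k * p (R ω))) ^ 2 ≤ m / (α * k) * Cv ^ 2 :=
  stmt3_general Cv k hk lam hlam hlamsum Cfun hCfun p α m hα hαm hp R hR hlaw
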